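/- Let k, d ≥ 1, c : Fin k → Fin d → ℕ with values in {0,1}, J ⊆ Fin k such that for every tuple i there is exactly one j ∈ J with c(j,i) = 1, and let J' ⊆ J. Define P(α) = ∑_i ∏_j α(j)^{c(j,i)}. Then for any α, ∑_{j∈J'} α(j)·(∂P/∂α(j))(α) = P(α'), where α' agrees with α except that α'(j) = 0 for all j ∈ J \ J'. -/

import Mathlib

/-!
Each term `α j ∂P/∂α j` is Euler's relation for monomials: it multiplies the monomial of column
`i` by its exponent `c j i`. Summing over `j ∈ J'`, column `i` gets the factor `∑_{j ∈ J'} c j i`,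
which is `1` or `0` according to whether the unique `j₀ ∈ J` with `c j₀ i = 1` lies in `J'`.
Setting the variables of `J \ J'` to zero has the same effect: it leaves the monomial unchanged in
the first case (they all have exponent `0`) and kills it in the second (through `α j₀ ^ 1`).
-/

open Finset Function

section Euler

variable {𝕜 ι κ : Type*} [NontriviallyNormedField 𝕜] [Fintype ι] [DecidableEq ι]

lemma prod_update_pow_eq (α : ι → 𝕜) (n : ι → ℕ) (j : ι) (x : 𝕜) :
    ∏ j', update α j x j' ^ n j' = x ^ n j * ∏ j' ∈ univ \ {j}, α j' ^ n j' := by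
  have hupdate : (fun j' => update α j x j' ^ n j') = update (fun j' => α j' ^ n j') j (x ^ n j) :=
    funext (apply_update (fun j' y => y ^ n j') α j x)
  rw [hupdate, prod_update_of_mem (mem_univ j)]

lemma mul_deriv_monomial_update (α : ι → 𝕜) (n : ι → ℕ) (j : ι) :
    α j * deriv (fun x => ∏ j', update α j x j' ^ n j') (α j) = n j * ∏ j', α j' ^ n j' := by
  have hmonomial := prod_update_pow_eq α n j (α j)
  rw [update_eq_self] at hmonomial
  simp only [prod_update_pow_eq, hmonomial]
  rw [deriv_mul_const (differentiableAt_pow _), deriv_pow_field]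
  rcases Nat.eq_zero_or_pos (n j) with h | h
  · simp [h]
  · rw [← mul_pow_sub_one h.ne' (α j)]
    ring

lemma mul_deriv_polynomial_update [Fintype κ] (α : ι → 𝕜) (c : ι → κ → ℕ) (j : ι) :
    α j * deriv (fun x => ∑ i, ∏ j', update α j x j' ^ c j' i) (α j)
      = ∑ i, (c j i : 𝕜) * ∏ j', α j' ^ c j' i := by
  have hdiff : ∀ i ∈ (univ : Finset κ),
      DifferentiableAt 𝕜 (fun x => ∏ j', update α j x j' ^ c j' i) (α j) := fun i _ => by
    simp only [prod_update_pow_eq]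
    exact (differentiableAt_pow _).mul_const _
  rw [deriv_fun_sum hdiff, mul_sum]
  exact sum_congr rfl fun i _ => mul_deriv_monomial_update α (c · i) j

end Euler

lemma sum_mul_prod_pow_eq_prod_pow_zero_sdiff {ι R : Type*} [Fintype ι] [DecidableEq ι]
    [CommSemiring R] (α : ι → R) (e : ι → ℕ) {J J' : Finset ι} (hJ' : J' ⊆ J) {j₀ : ι}
    (hj₀ : j₀ ∈ J) (he : ∀ j ∈ J, e j = if j = j₀ then 1 else 0) :
    (∑ j ∈ J', (e j : R)) * ∏ j, α j ^ e j
      = ∏ j, (if j ∈ J \ J' then 0 else α j) ^ e j := by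
  have hsum : ∑ j ∈ J', (e j : R) = if j₀ ∈ J' then 1 else 0 := by
    rw [← sum_ite_eq' J' j₀ (fun _ => (1 : R))]
    refine sum_congr rfl fun j hj => ?_
    rw [he j (hJ' hj)]
    split_ifs <;> simp
  rw [hsum]
  split_ifs with hj₀'
  · rw [one_mul]
    refine prod_congr rfl fun j _ => ?_
    split_ifs with hj
    · have hne : j ≠ j₀ := by rintro rfl; exact (mem_sdiff.mp hj).2 hj₀'
      simp [he j (mem_sdiff.mp hj).1, hne]
    · rfl
  · rw [zero_mul, eq_comm]
    apply prod_eq_zero (mem_univ j₀)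
    simp [mem_sdiff, hj₀, hj₀', he j₀ hj₀]

theorem stmt_14_general (k d : ℕ)
    (c : Fin k → Fin d → ℕ) (hc : ∀ j i, c j i = 0 ∨ c j i = 1)
    (J J' : Finset (Fin k)) (hJ' : J' ⊆ J)
    (hJ : ∀ i : Fin d, ∃! j : Fin k, j ∈ J ∧ c j i = 1)
    (α : Fin k → ℝ) :
    (∑ j ∈ J', α j * deriv (fun x : ℝ =>
        ∑ i : Fin d, ∏ j' : Fin k, (Function.update α j x) j' ^ c j' i) (α j))
      = ∑ i : Fin d, ∏ j : Fin k,
          (if j ∈ J \ J' then (0 : ℝ) else α j) ^ c j i := by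
  calc _ = ∑ j ∈ J', ∑ i, (c j i : ℝ) * ∏ j', α j' ^ c j' i :=
        sum_congr rfl fun j _ => mul_deriv_polynomial_update α c j
    _ = ∑ i, (∑ j ∈ J', (c j i : ℝ)) * ∏ j', α j' ^ c j' i := by
        rw [sum_comm]
        simp only [sum_mul]
    _ = _ := sum_congr rfl fun i _ => by
        obtain ⟨j₀, ⟨hj₀, hcj₀⟩, huniq⟩ := hJ i
        refine sum_mul_prod_pow_eq_prod_pow_zero_sdiff α (c · i) hJ' hj₀ fun j hj => ?_
        split_ifs with hjj₀
        · rwa [hjj₀]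
        · exact (hc j i).resolve_right fun h => hjj₀ (huniq j ⟨hj, h⟩)

theorem stmt_14 (k d : ℕ) (hk : 1 ≤ k) (hd : 1 ≤ d)
    (c : Fin k → Fin d → ℕ) (hc : ∀ j i, c j i = 0 ∨ c j i = 1)
    (J J' : Finset (Fin k)) (hJ' : J' ⊆ J)
    (hJ : ∀ i : Fin d, ∃! j : Fin k, j ∈ J ∧ c j i = 1)
    (α : Fin k → ℝ) :
    (∑ j ∈ J', α j * deriv (fun x : ℝ =>
        ∑ i : Fin d, ∏ j' : Fin k, (Function.update α j x) j' ^ c j' i) (α j))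
      = ∑ i : Fin d, ∏ j : Fin k,
          (if j ∈ J \ J' then (0 : ℝ) else α j) ^ c j i :=
  stmt_14_general k d c hc J J' hJ' hJ α
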